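/- arXiv:2008.10466 — 2 statements merged into one kernel-verified Lean document; each statement's English description precedes it below -/
import Mathlib

section
/- Let f : ℝ^{n×m} → ℝ be continuous, λ > 0, μ > 0. If (Ū, V̄) ∈ ℝ^{n×r} × ℝ^{m×r} is a strong local minimizer of F_μ (i.e. there exist α > 0 and δ > 0 such that F_μ(U,V) ≥ F_μ(Ū,V̄) + α‖(U,V) − (Ū,V̄)‖_F² whenever ‖(U,V) − (Ū,V̄)‖_F ≤ δ), then (Ū, V̄) is a strong local minimizer of Φ_{λ,μ}: there exist α' > 0 and ε > 0 such that Φ_{λ,μ}(U,V) ≥ Φ_{λ,μ}(Ū,V̄) + α'‖(U,V) − (Ū,V̄)‖_F² whenever ‖(U,V) − (Ū,V̄)‖_F ≤ ε. -/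
/-! A nonzero column stays nonzero under small perturbations, so `‖·‖_{2,0}` can only increase
near any point. Hence near `(Ū, V̄)` the penalty `λ(‖U‖_{2,0} + ‖V‖_{2,0})` is at least its value
at `(Ū, V̄)`, and the quadratic growth of `F_μ` passes to `Φ_{λ,μ}` with the same constant. -/

open Filter Topology Matrix

/-- The Frobenius (trace) inner product `⟨A,B⟩ = trace(AᵀB) = ∑ᵢⱼ Aᵢⱼ Bᵢⱼ` on matrices. -/
noncomputable def frobInner {α β : Type*} [Fintype α] [Fintype β] (A B : Matrix α β ℝ) : ℝ :=
  ∑ i, ∑ j, A i j * B i j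

/-- The column `ℓ_{2,0}`-norm: the number of nonzero columns. -/
noncomputable def l20 {α β : Type*} [Fintype α] [Fintype β] (A : Matrix α β ℝ) : ℕ :=
  {j : β | (fun i => A i j) ≠ 0}.ncard

/-- `F_μ(U,V) = f(UVᵀ) + (μ/2)(‖U‖_F² + ‖V‖_F²)`. -/
noncomputable def Fmu {n m r : ℕ} (f : Matrix (Fin n) (Fin m) ℝ → ℝ) (mu : ℝ)
    (U : Matrix (Fin n) (Fin r) ℝ) (V : Matrix (Fin m) (Fin r) ℝ) : ℝ :=
  f (U * Vᵀ) + mu / 2 * (frobInner U U + frobInner V V)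

/-- `Φ_{λ,μ}(U,V) = f(UVᵀ) + (μ/2)(‖U‖_F² + ‖V‖_F²) + λ(‖U‖_{2,0} + ‖V‖_{2,0})`. -/
noncomputable def Phi {n m r : ℕ} (f : Matrix (Fin n) (Fin m) ℝ → ℝ) (lam mu : ℝ)
    (U : Matrix (Fin n) (Fin r) ℝ) (V : Matrix (Fin m) (Fin r) ℝ) : ℝ :=
  Fmu f mu U V + lam * ((l20 U : ℝ) + (l20 V : ℝ))

/-- The squared Frobenius norm of a pair: `‖(U,V)‖_F² = ‖U‖_F² + ‖V‖_F²`. -/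
noncomputable def pairNormSq {n m r : ℕ}
    (U : Matrix (Fin n) (Fin r) ℝ) (V : Matrix (Fin m) (Fin r) ℝ) : ℝ :=
  frobInner U U + frobInner V V

section Frobenius

variable {α β : Type*} [Fintype α] [Fintype β]

theorem eventually_l20_le (A : Matrix α β ℝ) : ∀ᶠ B in 𝓝 A, l20 A ≤ l20 B := by
  have hcols : ∀ᶠ B in 𝓝 A, ∀ j, (fun i => A i j) ≠ 0 → (fun i => B i j) ≠ 0 :=
    Filter.eventually_all.2 fun j => Filter.eventually_imp_distrib_left.2 fun hj =>
      ((continuous_pi fun i => continuous_apply_apply i j).continuousAt.eventually_ne hj)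
  filter_upwards [hcols] with B hB
  exact Set.ncard_le_ncard (fun j hj => hB j hj) (Set.toFinite _)

attribute [local instance] Matrix.frobeniusNormedAddCommGroup

theorem frobInner_self_eq_norm_sq (A : Matrix α β ℝ) : frobInner A A = ‖A‖ ^ 2 := by
  rw [Matrix.frobenius_norm_def, ← Real.rpow_natCast, ← Real.rpow_mul (by positivity)]
  norm_num [frobInner, ← pow_two]

theorem exists_pos_forall_norm_sub_le_l20_le (A : Matrix α β ℝ) :
    ∃ ε > 0, ∀ B : Matrix α β ℝ, ‖B - A‖ ≤ ε → l20 A ≤ l20 B := by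
  obtain ⟨ε, hε, h⟩ := Metric.eventually_nhds_iff.1 (eventually_l20_le A)
  exact ⟨ε / 2, by positivity, fun B hB => h (by rw [dist_eq_norm]; linarith)⟩

theorem norm_le_sqrt_pairNormSq_left {n m r : ℕ}
    (U : Matrix (Fin n) (Fin r) ℝ) (V : Matrix (Fin m) (Fin r) ℝ) :
    ‖U‖ ≤ √(pairNormSq U V) := by
  refine Real.le_sqrt_of_sq_le ?_
  rw [pairNormSq, frobInner_self_eq_norm_sq, frobInner_self_eq_norm_sq]
  exact le_add_of_nonneg_right (sq_nonneg _)

theorem norm_le_sqrt_pairNormSq_right {n m r : ℕ}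
    (U : Matrix (Fin n) (Fin r) ℝ) (V : Matrix (Fin m) (Fin r) ℝ) :
    ‖V‖ ≤ √(pairNormSq U V) := by
  refine Real.le_sqrt_of_sq_le ?_
  rw [pairNormSq, frobInner_self_eq_norm_sq, frobInner_self_eq_norm_sq]
  exact le_add_of_nonneg_left (sq_nonneg _)

end Frobenius

theorem exists_pos_l20_le_of_sqrt_pairNormSq_sub_le {n m r : ℕ}
    (Ubar : Matrix (Fin n) (Fin r) ℝ) (Vbar : Matrix (Fin m) (Fin r) ℝ) :
    ∃ ε > 0, ∀ (U : Matrix (Fin n) (Fin r) ℝ) (V : Matrix (Fin m) (Fin r) ℝ),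
      √(pairNormSq (U - Ubar) (V - Vbar)) ≤ ε → l20 Ubar ≤ l20 U ∧ l20 Vbar ≤ l20 V := by
  obtain ⟨εU, hεU, hU⟩ := exists_pos_forall_norm_sub_le_l20_le Ubar
  obtain ⟨εV, hεV, hV⟩ := exists_pos_forall_norm_sub_le_l20_le Vbar
  refine ⟨min εU εV, lt_min hεU hεV, fun U V hUV => ⟨hU U ?_, hV V ?_⟩⟩
  · exact (norm_le_sqrt_pairNormSq_left _ _).trans (hUV.trans (min_le_left _ _))
  · exact (norm_le_sqrt_pairNormSq_right _ _).trans (hUV.trans (min_le_right _ _))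

theorem strong_local_min_Fmu_imp_Phi_general {n m r : ℕ}
    (f : Matrix (Fin n) (Fin m) ℝ → ℝ)
    (lam mu : ℝ) (hlam : 0 < lam)
    (Ubar : Matrix (Fin n) (Fin r) ℝ) (Vbar : Matrix (Fin m) (Fin r) ℝ)
    (hmin : ∃ α > (0:ℝ), ∃ δ > (0:ℝ), ∀ (U : Matrix (Fin n) (Fin r) ℝ)
        (V : Matrix (Fin m) (Fin r) ℝ),
        Real.sqrt (pairNormSq (U - Ubar) (V - Vbar)) ≤ δ →
        Fmu f mu U V ≥ Fmu f mu Ubar Vbar + α * pairNormSq (U - Ubar) (V - Vbar)) :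
    ∃ α' > (0:ℝ), ∃ ε > (0:ℝ), ∀ (U : Matrix (Fin n) (Fin r) ℝ)
        (V : Matrix (Fin m) (Fin r) ℝ),
        Real.sqrt (pairNormSq (U - Ubar) (V - Vbar)) ≤ ε →
        Phi f lam mu U V ≥ Phi f lam mu Ubar Vbar + α' * pairNormSq (U - Ubar) (V - Vbar) := by
  obtain ⟨α, hα, δ, hδ, hF⟩ := hmin
  obtain ⟨ε, hε, hl20⟩ := exists_pos_l20_le_of_sqrt_pairNormSq_sub_le Ubar Vbar
  refine ⟨α, hα, min δ ε, lt_min hδ hε, fun U V hUV => ?_⟩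
  have hFUV := hF U V (hUV.trans (min_le_left _ _))
  obtain ⟨hlU, hlV⟩ := hl20 U V (hUV.trans (min_le_right _ _))
  have hpenalty : lam * ((l20 Ubar : ℝ) + l20 Vbar) ≤ lam * ((l20 U : ℝ) + l20 V) := by
    gcongr
  rw [Phi, Phi]
  linarith

/-- if `(Ū,V̄)` is a strong local minimizer of `F_μ`, then it is a strong
local minimizer of `Φ_{λ,μ}`. -/
theorem strong_local_min_Fmu_imp_Phi {n m r : ℕ}
    (f : Matrix (Fin n) (Fin m) ℝ → ℝ) (hf : Continuous f)
    (lam mu : ℝ) (hlam : 0 < lam) (hmu : 0 < mu)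
    (Ubar : Matrix (Fin n) (Fin r) ℝ) (Vbar : Matrix (Fin m) (Fin r) ℝ)
    (hmin : ∃ α > (0:ℝ), ∃ δ > (0:ℝ), ∀ (U : Matrix (Fin n) (Fin r) ℝ)
        (V : Matrix (Fin m) (Fin r) ℝ),
        Real.sqrt (pairNormSq (U - Ubar) (V - Vbar)) ≤ δ →
        Fmu f mu U V ≥ Fmu f mu Ubar Vbar + α * pairNormSq (U - Ubar) (V - Vbar)) :
    ∃ α' > (0:ℝ), ∃ ε > (0:ℝ), ∀ (U : Matrix (Fin n) (Fin r) ℝ)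
        (V : Matrix (Fin m) (Fin r) ℝ),
        Real.sqrt (pairNormSq (U - Ubar) (V - Vbar)) ≤ ε →
        Phi f lam mu U V ≥ Phi f lam mu Ubar Vbar + α' * pairNormSq (U - Ubar) (V - Vbar) :=
  strong_local_min_Fmu_imp_Phi_general f lam mu hlam Ubar Vbar hmin
end

section
/- Let f : ℝ^{n×m} → ℝ be continuous, λ > 0, μ > 0. If (Ū, V̄) ∈ ℝ^{n×r} × ℝ^{m×r} is a local minimizer of F_μ, then (Ū, V̄) is a local minimizer of Φ_{λ,μ}. -/
open Filter Topology Matrix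

/-!
The column `ℓ_{2,0}`-norm can only go up under small perturbations: a nonzero column has a
nonzero entry, which stays nonzero nearby. Hence near a local minimizer of `F_μ` both summands
of `Φ_{λ,μ} = F_μ + λ(‖U‖_{2,0} + ‖V‖_{2,0})` are at least their value at `(Ū, V̄)`.
-/

section Frobenius

variable {α β : Type*} [Fintype α] [Fintype β]

lemma frobInner_self_nonneg (A : Matrix α β ℝ) : 0 ≤ frobInner A A :=
  Finset.sum_nonneg fun _ _ => Finset.sum_nonneg fun _ _ => mul_self_nonneg _

lemma mul_self_apply_le_frobInner_self (A : Matrix α β ℝ) (i : α) (j : β) :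
    A i j * A i j ≤ frobInner A A :=
  calc A i j * A i j ≤ ∑ j', A i j' * A i j' :=
        Finset.single_le_sum (fun _ _ => mul_self_nonneg _) (Finset.mem_univ j)
    _ ≤ frobInner A A :=
        Finset.single_le_sum (f := fun i' => ∑ j', A i' j' * A i' j')
          (fun _ _ => Finset.sum_nonneg fun _ _ => mul_self_nonneg _) (Finset.mem_univ i)

lemma abs_apply_le_sqrt_frobInner_self (A : Matrix α β ℝ) (i : α) (j : β) :
    |A i j| ≤ Real.sqrt (frobInner A A) :=
  Real.abs_le_sqrt (by simpa [sq] using mul_self_apply_le_frobInner_self A i j)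

end Frobenius

section PairNorm

variable {n m r : ℕ} (U : Matrix (Fin n) (Fin r) ℝ) (V : Matrix (Fin m) (Fin r) ℝ)

lemma abs_apply_le_sqrt_pairNormSq_left (i : Fin n) (j : Fin r) :
    |U i j| ≤ Real.sqrt (pairNormSq U V) :=
  (abs_apply_le_sqrt_frobInner_self U i j).trans <|
    Real.sqrt_le_sqrt (le_add_of_nonneg_right (frobInner_self_nonneg V))

lemma abs_apply_le_sqrt_pairNormSq_right (i : Fin m) (j : Fin r) :
    |V i j| ≤ Real.sqrt (pairNormSq U V) :=
  (abs_apply_le_sqrt_frobInner_self V i j).trans <|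
    Real.sqrt_le_sqrt (le_add_of_nonneg_left (frobInner_self_nonneg U))

end PairNorm

section L20

variable {α β : Type*} [Fintype α] [Fintype β]

lemma l20_le_l20_of_ne_zero {A B : Matrix α β ℝ} (h : ∀ i j, A i j ≠ 0 → B i j ≠ 0) :
    l20 A ≤ l20 B := by
  refine Set.ncard_le_ncard (fun j hj => ?_) (Set.toFinite _)
  obtain ⟨i, hi⟩ := Function.ne_iff.mp hj
  exact Function.ne_iff.mpr ⟨i, h i j hi⟩

lemma exists_pos_forall_lt_abs_apply (A : Matrix α β ℝ) :
    ∃ c > (0 : ℝ), ∀ i j, A i j ≠ 0 → c < |A i j| := by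
  have : ∀ᶠ c in 𝓝[>] (0 : ℝ), ∀ i j, A i j ≠ 0 → c < |A i j| := by
    simp only [eventually_all]
    intro i j hij
    exact nhdsWithin_le_nhds (eventually_lt_nhds (abs_pos.mpr hij))
  obtain ⟨c, hc, hcA⟩ := (this.and self_mem_nhdsWithin).exists
  exact ⟨c, hcA, hc⟩

lemma exists_pos_l20_le_of_abs_sub_le (A : Matrix α β ℝ) :
    ∃ c > (0 : ℝ), ∀ B : Matrix α β ℝ, (∀ i j, |B i j - A i j| ≤ c) → l20 A ≤ l20 B := by
  obtain ⟨c, hc, hcA⟩ := exists_pos_forall_lt_abs_apply A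
  refine ⟨c, hc, fun B hB => l20_le_l20_of_ne_zero fun i j hij hBij => ?_⟩
  have := hB i j
  rw [hBij, zero_sub, abs_neg] at this
  exact (hcA i j hij).not_ge this

end L20

theorem local_min_Fmu_imp_Phi_general {n m r : ℕ}
    (f : Matrix (Fin n) (Fin m) ℝ → ℝ)
    (lam mu : ℝ) (hlam : 0 < lam)
    (Ubar : Matrix (Fin n) (Fin r) ℝ) (Vbar : Matrix (Fin m) (Fin r) ℝ)
    (hmin : ∃ δ > (0:ℝ), ∀ (U : Matrix (Fin n) (Fin r) ℝ) (V : Matrix (Fin m) (Fin r) ℝ),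
        Real.sqrt (pairNormSq (U - Ubar) (V - Vbar)) ≤ δ →
        Fmu f mu Ubar Vbar ≤ Fmu f mu U V) :
    ∃ ε > (0:ℝ), ∀ (U : Matrix (Fin n) (Fin r) ℝ) (V : Matrix (Fin m) (Fin r) ℝ),
        Real.sqrt (pairNormSq (U - Ubar) (V - Vbar)) ≤ ε →
        Phi f lam mu Ubar Vbar ≤ Phi f lam mu U V := by
  obtain ⟨δ, hδ, hF⟩ := hmin
  obtain ⟨cU, hcU, hU⟩ := exists_pos_l20_le_of_abs_sub_le Ubar
  obtain ⟨cV, hcV, hV⟩ := exists_pos_l20_le_of_abs_sub_le Vbar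
  refine ⟨min δ (min cU cV), by positivity, fun U V hUV => ?_⟩
  have hε : Real.sqrt (pairNormSq (U - Ubar) (V - Vbar)) ≤ min cU cV :=
    hUV.trans (min_le_right _ _)
  have hl20U : l20 Ubar ≤ l20 U := hU U fun i j =>
    (abs_apply_le_sqrt_pairNormSq_left (U - Ubar) (V - Vbar) i j).trans
      (hε.trans (min_le_left _ _))
  have hl20V : l20 Vbar ≤ l20 V := hV V fun i j =>
    (abs_apply_le_sqrt_pairNormSq_right (U - Ubar) (V - Vbar) i j).trans
      (hε.trans (min_le_right _ _))
  unfold Phi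
  gcongr
  exact hF U V (hUV.trans (min_le_left _ _))

/-- if `(Ū,V̄)` is a local minimizer of `F_μ`, then it is a local
minimizer of `Φ_{λ,μ}`. -/
theorem local_min_Fmu_imp_Phi {n m r : ℕ}
    (f : Matrix (Fin n) (Fin m) ℝ → ℝ) (hf : Continuous f)
    (lam mu : ℝ) (hlam : 0 < lam) (hmu : 0 < mu)
    (Ubar : Matrix (Fin n) (Fin r) ℝ) (Vbar : Matrix (Fin m) (Fin r) ℝ)
    (hmin : ∃ δ > (0:ℝ), ∀ (U : Matrix (Fin n) (Fin r) ℝ) (V : Matrix (Fin m) (Fin r) ℝ),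
        Real.sqrt (pairNormSq (U - Ubar) (V - Vbar)) ≤ δ →
        Fmu f mu Ubar Vbar ≤ Fmu f mu U V) :
    ∃ ε > (0:ℝ), ∀ (U : Matrix (Fin n) (Fin r) ℝ) (V : Matrix (Fin m) (Fin r) ℝ),
        Real.sqrt (pairNormSq (U - Ubar) (V - Vbar)) ≤ ε →
        Phi f lam mu Ubar Vbar ≤ Phi f lam mu U V :=
  local_min_Fmu_imp_Phi_general f lam mu hlam Ubar Vbar hmin
end
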